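/- Let x*₁,…,x*_p ∈ ℝⁿ and let V₁,…,V_p : ℝⁿ → ℝ be continuously differentiable with V_j(x*_j) = 0. Fix constants c_j > 0 and define h_j(x) := c_j − V_j(x), the regions R_j := {x : V_j(x) ≤ c_j}, the pivot h̃(x) := max^{(r)}(h₁(x),…,h_p(x)) for a fixed r ∈ {1,…,p}, and the combinatorial region of attraction R̃ := {x : h̃(x) ≥ 0}. Fix j† ∈ {1,…,p} and assume: (a) x*_{j†} lies in the interior of R̃ ∩ R_{j†}; (b) there exist r₀ > 0 and class-K functions α₁, α₂ (with R_{j†} contained in the ball of radius r₀ about x*_{j†}) such that α₁(‖x − x*_{j†}‖) ≤ V_{j†}(x) ≤ α₂(‖x − x*_{j†}‖) for all x with ‖x − x*_{j†}‖ < r₀; (c) there are a continuous closed-loop vector field F : ℝⁿ → ℝⁿ with F(x*_{j†}) = 0, a continuous function θ : ℝⁿ → [0,∞), a locally Lipschitz class-K function α_{j†}, a locally Lipschitz extended class-K function α_{h̃}, a continuous positive definite ρ : ℝ → ℝ, and an open set D ⊇ R̃ such that for all x ∈ D: ⟨∇V_{j†}(x), F(x)⟩ ≤ −α_{j†}(V_{j†}(x))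 + θ(x)·max(0, −h_{j†}(x)), and for every j ∈ {1,…,p}: ⟨∇h_j(x), F(x)⟩ ≥ −α_{h̃}(h_j(x)) − θ(x)·ρ(h_j(x) − h̃(x)). Then: (i) every solution x(·) of ẋ = F(x) on [0,∞) with x(0) ∈ R̃ satisfies x(t) ∈ R̃ for all t ≥ 0; (ii) x*_{j†} is asymptotically stable for ẋ = F(x) (for every ε > 0 there is δ > 0 such that solutions starting within δ of x*_{j†} remain within ε for all t ≥ 0, and solutions starting sufficiently close converge to x*_{j†}); and (iii) every solution with x(0) ∈ R̃ ∩ R_{j†} satisfies x(t) ∈ R̃ ∩ R_{j†} for all t ≥ 0 and x(t) → x*_{j†} as t → ∞. -/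

import Mathlib

/-! The pivot `h̃ = max^{(r)} h_j` is only Lipschitz, but it dominates `min_{j ∈ S} h_j` for
every `r`-set `S`, with equality for some `S`. At a time where `h̃ ≤ 0`, an index of that `S` with
`h_j = h̃` has `ḣ_j ≥ -α_{h̃}(h̃) - θ ρ(0) ≥ 0`, and one with `h_j > h̃` stays above `h̃` for a
while, so `h̃` has nonnegative lower right Dini derivative along solutions wherever `h̃ ≤ 0` in
`D`. A Dini comparison argument, localized to the open set `D ⊇ R̃`, makes `R̃` forward invariant.
On `R̃` the relaxation term of the CLF condition vanishes as long as `V_{j†} ≤ c_{j†}`, so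
`V̇_{j†} ≤ -α_{j†}(c_{j†}) < 0` on the level set `V_{j†} = c_{j†}` and `R̃ ∩ R_{j†}` is forward
invariant too. There `V_{j†}` is a Lyapunov function sandwiched between `α₁` and `α₂`, and the
usual Lyapunov argument gives stability and convergence. -/

open scoped RealInnerProductSpace

/-- The `r`-th largest value among `w 0, …, w (p-1)`: the maximum over all subsets
`S ⊆ Fin p` with `|S| = r` of `min_{j ∈ S} w j`. -/
noncomputable def rthMax {p : ℕ} (r : ℕ) (w : Fin p → ℝ) : ℝ :=
  sSup {m : ℝ | ∃ S : Finset (Fin p), S.card = r ∧ m = sInf (w '' ↑S)}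

/-- A class-K function: continuous and strictly increasing on `[0,∞)`, vanishing at `0`,
and mapping `[0,∞)` into `[0,∞)`. -/
def IsClassK (α : ℝ → ℝ) : Prop :=
  ContinuousOn α (Set.Ici 0) ∧ StrictMonoOn α (Set.Ici 0) ∧ α 0 = 0 ∧
    ∀ s : ℝ, 0 ≤ s → 0 ≤ α s

/-- An extended class-K function: continuous, strictly increasing, vanishing at `0`. -/
def IsClassKe (α : ℝ → ℝ) : Prop :=
  Continuous α ∧ StrictMono α ∧ α 0 = 0

/-- A positive definite function: nonnegative, vanishing exactly at `0`. -/
def IsPosDef (ρ : ℝ → ℝ) : Prop :=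
  (∀ s : ℝ, 0 ≤ ρ s) ∧ ρ 0 = 0 ∧ ∀ s : ℝ, s ≠ 0 → 0 < ρ s

open Set Filter Topology

lemma HasDerivAt.eventually_sub_mul_le {g : ℝ → ℝ} {d t m ε : ℝ} (hg : HasDerivAt g d t)
    (hε : 0 < ε) (hm : m ≤ g t) (hd : g t = m → 0 ≤ d) :
    ∀ᶠ s in 𝓝[>] t, m - ε * (s - t) ≤ g s := by
  rcases hm.lt_or_eq with hlt | heq
  · filter_upwards [(hg.continuousAt.eventually (lt_mem_nhds hlt)).filter_mono nhdsWithin_le_nhds,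
      self_mem_nhdsWithin] with s hs hts
    nlinarith [mul_pos hε (sub_pos.2 (mem_Ioi.1 hts))]
  · have hslope : ∀ᶠ s in 𝓝[>] t, -ε < slope g t s :=
      ((hasDerivAt_iff_tendsto_slope.1 hg).mono_left (nhdsGT_le_nhdsNE t)).eventually
        (lt_mem_nhds (by linarith [hd heq.symm]))
    filter_upwards [hslope, self_mem_nhdsWithin] with s hs hts
    rw [slope_def_field, lt_div_iff₀ (sub_pos.2 (mem_Ioi.1 hts))] at hs
    linarith

lemma nonneg_of_forall_nonpos_eventually_sub_mul_le {f : ℝ → ℝ} {a b : ℝ}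
    (hf : ContinuousOn f (Icc a b)) (ha : 0 ≤ f a)
    (hdini : ∀ t ∈ Ico a b, f t ≤ 0 → ∀ ε > 0, ∀ᶠ s in 𝓝[>] t, f t - ε * (s - t) ≤ f s) :
    ∀ t ∈ Icc a b, 0 ≤ f t := by
  -- The Dini bound is only known where `f ≤ 0`; `max (-f) 0` satisfies its mirror image everywhere.
  have key := image_le_of_liminf_slope_right_le_deriv_boundary (f := fun t => max (-f t) 0)
    (B := fun _ => 0) (B' := fun _ => 0) (by fun_prop) (by simpa using ha)
    continuousOn_const (fun _ _ => hasDerivWithinAt_const _ _ _) ?_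
  · intro t ht
    simpa using key ht
  intro t ht ε hε
  rcases le_or_gt (f t) 0 with hft | hft
  · refine ((hdini t ht hft (ε / 2) (half_pos hε)).and self_mem_nhdsWithin).frequently.mono ?_
    rintro s ⟨hs, hts⟩
    have hst := mul_pos hε (sub_pos.2 (mem_Ioi.1 hts))
    rw [slope_def_field, div_lt_iff₀ (sub_pos.2 (mem_Ioi.1 hts)), max_eq_left (neg_nonneg.2 hft)]
    rcases le_total (-f s) 0 with hfs | hfs
    · rw [max_eq_right hfs]; linarith
    · rw [max_eq_left hfs]; linarith
  · have hpos : ∀ᶠ s in 𝓝[>] t, 0 < f s :=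
      nhdsWithin_le_of_mem (Icc_mem_nhdsGT_of_mem ht)
        (hf t (Ico_subset_Icc_self ht) (lt_mem_nhds hft))
    refine hpos.frequently.mono fun s hs => ?_
    simp [slope_def_field, hs.le, hft.le, hε]

lemma nonneg_of_eventually_nonneg_of_eq_zero {f : ℝ → ℝ} {a : ℝ} (hf : ContinuousOn f (Ici a))
    (ha : 0 ≤ f a) (hzero : ∀ t ∈ Ici a, f t = 0 → ∀ᶠ s in 𝓝[>] t, 0 ≤ f s) :
    ∀ t ∈ Ici a, 0 ≤ f t := by
  intro t ht
  refine IsClosed.Icc_subset_of_forall_mem_nhdsWithin (s := {s | 0 ≤ f s}) ?_ ha ?_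
    ⟨mem_Ici.1 ht, le_rfl⟩
  · rw [inter_comm]
    exact (hf.mono Icc_subset_Ici_self).preimage_isClosed_of_isClosed isClosed_Icc isClosed_Ici
  · rintro s ⟨hs, hsI⟩
    rcases (show 0 ≤ f s from hs).lt_or_eq with hpos | hzero'
    · exact mem_of_superset
        (nhdsWithin_le_of_mem (mem_of_superset self_mem_nhdsWithin (Ioi_subset_Ici hsI.1))
          (hf s hsI.1 (lt_mem_nhds hpos))) fun _ (h : 0 < f _) => h.le
    · exact hzero s hsI.1 hzero'.symm

lemma le_sub_mul_of_hasDerivAt_le {v v' : ℝ → ℝ} {k s t : ℝ} (hst : s ≤ t)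
    (hv : ∀ u ∈ Icc s t, HasDerivAt v (v' u) u) (hk : ∀ u ∈ Ico s t, v' u ≤ -k) :
    v t ≤ v s - k * (t - s) :=
  image_le_of_deriv_right_le_deriv_boundary (B := fun u => v s - k * (u - s)) (B' := fun _ => -k)
    (fun u hu => (hv u hu).continuousAt.continuousWithinAt)
    (fun u hu => (hv u (Ico_subset_Icc_self hu)).hasDerivWithinAt) (by simp) (by fun_prop)
    (fun u _ => by
      simpa using ((((hasDerivAt_id u).sub_const s).const_mul k).const_sub (v s)).hasDerivWithinAt)
    hk ⟨hst, le_rfl⟩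

namespace IsClassK

variable {α : ℝ → ℝ}

lemma pos (hα : IsClassK α) {s : ℝ} (hs : 0 < s) : 0 < α s :=
  hα.2.2.1 ▸ hα.2.1 self_mem_Ici (mem_Ici.2 hs.le) hs

lemma lt_of_apply_lt (hα : IsClassK α) {s u : ℝ} (hs : 0 ≤ s) (hu : 0 ≤ u) (h : α s < α u) :
    s < u :=
  (hα.2.1.lt_iff_lt hs hu).1 h

lemma tendsto_zero_of_le {ι : Type*} {l : Filter ι} (hα : IsClassK α) {u w : ι → ℝ}
    (hu : ∀ i, 0 ≤ u i) (hle : ∀ᶠ i in l, α (u i) ≤ w i) (hw : Tendsto w l (𝓝 0)) :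
    Tendsto u l (𝓝 0) := by
  refine tendsto_order.2 ⟨fun a ha => Eventually.of_forall fun i => ha.trans_le (hu i),
    fun ε hε => ?_⟩
  filter_upwards [hle, hw.eventually (gt_mem_nhds (hα.pos hε))] with i hi hwi
  exact hα.lt_of_apply_lt (hu i) hε.le (hi.trans_lt hwi)

end IsClassK

lemma tendsto_zero_of_hasDerivAt_le_neg {α v v' : ℝ → ℝ} (hα : IsClassK α)
    (hv : ∀ t, 0 ≤ t → HasDerivAt v (v' t) t) (hv' : ∀ t, 0 ≤ t → v' t ≤ -α (v t))
    (hnn : ∀ t, 0 ≤ t → 0 ≤ v t) : Tendsto v atTop (𝓝 0) := by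
  have hdec : ∀ k, (∀ t, 0 ≤ t → k ≤ α (v t)) →
      ∀ s t, 0 ≤ s → s ≤ t → v t ≤ v s - k * (t - s) := fun k hk s t hs hst =>
    le_sub_mul_of_hasDerivAt_le hst (fun u hu => hv u (hs.trans hu.1)) fun u hu => by
      linarith [hv' u (hs.trans hu.1), hk u (hs.trans hu.1)]
  have hanti := hdec 0 fun t ht => hα.2.2.2 _ (hnn t ht)
  refine tendsto_order.2 ⟨fun a ha => (eventually_ge_atTop 0).mono fun t ht =>
    ha.trans_le (hnn t ht), fun ε hε => ?_⟩
  obtain ⟨T, hT, hvT⟩ : ∃ T, 0 ≤ T ∧ v T < ε := by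
    by_contra! hge
    have hk := hα.pos hε
    have hT : 0 ≤ (v 0 + 1) / α ε := div_nonneg (by linarith [hnn 0 le_rfl]) hk.le
    have := hdec (α ε) (fun t ht => hα.2.1.monotoneOn hε.le (hnn t ht) (hge t ht)) 0 _ le_rfl hT
    rw [sub_zero, mul_div_cancel₀ _ hk.ne'] at this
    linarith [hnn _ hT]
  filter_upwards [eventually_ge_atTop T] with t ht
  linarith [hanti T t hT ht]

section rthMax

variable {p r : ℕ}

lemma rthMax_candidates_finite (w : Fin p → ℝ) :
    {m : ℝ | ∃ S : Finset (Fin p), S.card = r ∧ m = sInf (w '' ↑S)}.Finite :=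
  (finite_range fun S : Finset (Fin p) => sInf (w '' ↑S)).subset
    fun _ ⟨S, _, hm⟩ => ⟨S, hm.symm⟩

lemma exists_card_eq_forall_rthMax_le (hrp : r ≤ p) (w : Fin p → ℝ) :
    ∃ S : Finset (Fin p), S.card = r ∧ ∀ j ∈ S, rthMax r w ≤ w j := by
  obtain ⟨S, -, hS⟩ := Finset.exists_subset_card_eq (s := (Finset.univ : Finset (Fin p)))
    (by simpa using hrp)
  obtain ⟨T, hT, hmax⟩ := Set.Nonempty.csSup_mem (⟨_, S, hS, rfl⟩ :
    {m : ℝ | ∃ S : Finset (Fin p), S.card = r ∧ m = sInf (w '' ↑S)}.Nonempty)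
    (rthMax_candidates_finite w)
  refine ⟨T, hT, fun j hj => ?_⟩
  rw [rthMax, hmax]
  exact csInf_le (T.finite_toSet.image w).bddBelow (mem_image_of_mem w hj)

lemma le_rthMax_iff (hr1 : 1 ≤ r) (hrp : r ≤ p) {w : Fin p → ℝ} {a : ℝ} :
    a ≤ rthMax r w ↔ ∃ S : Finset (Fin p), S.card = r ∧ ∀ j ∈ S, a ≤ w j := by
  constructor
  · intro ha
    obtain ⟨S, hS, hle⟩ := exists_card_eq_forall_rthMax_le hrp w
    exact ⟨S, hS, fun j hj => ha.trans (hle j hj)⟩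
  · rintro ⟨S, hS, hle⟩
    have hne : S.Nonempty := Finset.card_pos.1 (by omega)
    calc a ≤ sInf (w '' ↑S) :=
          le_csInf (hne.to_set.image w) (by rintro _ ⟨j, hj, rfl⟩; exact hle j hj)
      _ ≤ rthMax r w := le_csSup (rthMax_candidates_finite w).bddAbove ⟨S, hS, rfl⟩

lemma lipschitzWith_rthMax (hr1 : 1 ≤ r) (hrp : r ≤ p) :
    LipschitzWith 1 (rthMax (p := p) r) := by
  refine LipschitzWith.of_le_add fun w v => ?_
  obtain ⟨S, hS, hle⟩ := exists_card_eq_forall_rthMax_le hrp w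
  have hw : rthMax r w - dist w v ≤ rthMax r v := (le_rthMax_iff hr1 hrp).2 ⟨S, hS, fun j hj => by
    have hwv := Real.dist_eq _ _ ▸ dist_le_pi_dist w v j
    linarith [hle j hj, le_abs_self (w j - v j)]⟩
  linarith

lemma eventually_rthMax_sub_mul_le (hr1 : 1 ≤ r) (hrp : r ≤ p) {g : ℝ → Fin p → ℝ}
    {g' : Fin p → ℝ} {t ε : ℝ} (hε : 0 < ε) (hg : ∀ j, HasDerivAt (fun s => g s j) (g' j) t)
    (hact : ∀ j, g t j = rthMax r (g t) → 0 ≤ g' j) :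
    ∀ᶠ s in 𝓝[>] t, rthMax r (g t) - ε * (s - t) ≤ rthMax r (g s) := by
  obtain ⟨S, hS, hle⟩ := exists_card_eq_forall_rthMax_le hrp (g t)
  filter_upwards [(Finset.eventually_all S).2 fun j hj =>
    (hg j).eventually_sub_mul_le hε (hle j hj) (hact j)] with s hs
  exact (le_rthMax_iff hr1 hrp).2 ⟨S, hS, hs⟩

end rthMax

def IsForwardSolution {E : Type*} [NormedAddCommGroup E] [NormedSpace ℝ E] (F : E → E)
    (x : ℝ → E) : Prop :=
  ∀ t, 0 ≤ t → HasDerivAt x (F (x t)) t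

namespace IsForwardSolution

variable {E : Type*} [NormedAddCommGroup E] [InnerProductSpace ℝ E] [CompleteSpace E]
  {F : E → E} {x : ℝ → E}

lemma hasDerivAt_comp (hx : IsForwardSolution F x) {W : E → ℝ} {t : ℝ} (ht : 0 ≤ t)
    (hW : DifferentiableAt ℝ W (x t)) :
    HasDerivAt (fun s => W (x s)) ⟪gradient W (x t), F (x t)⟫ t :=
  hW.hasGradientAt.hasFDerivAt.comp_hasDerivAt t (hx t ht)

lemma le_of_inner_gradient_neg (hx : IsForwardSolution F x) {W : E → ℝ} {S : Set E} {c : ℝ}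
    (hW : Differentiable ℝ W) (hxS : ∀ t, 0 ≤ t → x t ∈ S)
    (hneg : ∀ y ∈ S, W y = c → ⟪gradient W y, F y⟫ < 0) (h0 : W (x 0) ≤ c) :
    ∀ t, 0 ≤ t → W (x t) ≤ c := by
  intro t ht
  have hder : ∀ s ∈ Ico 0 t, HasDerivAt (fun s => W (x s)) ⟪gradient W (x s), F (x s)⟫ s :=
    fun s hs => hx.hasDerivAt_comp hs.1 (hW _)
  refine image_le_of_deriv_right_lt_deriv_boundary (B' := fun _ => 0)
    (fun s hs => (hx.hasDerivAt_comp hs.1 (hW _)).continuousAt.continuousWithinAt)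
    (fun s hs => (hder s hs).hasDerivWithinAt) h0 (fun _ => hasDerivAt_const _ c)
    (fun s hs hWs => hneg _ (hxS s hs.1) hWs) ⟨ht, le_rfl⟩

lemma rthMax_nonneg {p r : ℕ} (hx : IsForwardSolution F x) (hr1 : 1 ≤ r) (hrp : r ≤ p)
    {h : Fin p → E → ℝ} (hh : ∀ j, Differentiable ℝ (h j)) {D : Set E} (hD : IsOpen D)
    (hRD : ∀ y, 0 ≤ rthMax r (fun j => h j y) → y ∈ D)
    (hact : ∀ j, ∀ y ∈ D, rthMax r (fun i => h i y) ≤ 0 →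
      h j y = rthMax r (fun i => h i y) → 0 ≤ ⟪gradient (h j) y, F y⟫)
    (h0 : 0 ≤ rthMax r (fun j => h j (x 0))) :
    ∀ t, 0 ≤ t → 0 ≤ rthMax r (fun j => h j (x t)) := by
  set m := fun s => rthMax r (fun j => h j (x s))
  have hm : ContinuousOn m (Ici 0) := fun t ht =>
    ((lipschitzWith_rthMax hr1 hrp).continuous.continuousAt.comp (continuousAt_pi.2 fun j =>
      (hh j).continuous.continuousAt.comp (hx t ht).continuousAt)).continuousWithinAt
  have hdini : ∀ t, 0 ≤ t → x t ∈ D → m t ≤ 0 →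
      ∀ ε > 0, ∀ᶠ s in 𝓝[>] t, m t - ε * (s - t) ≤ m s := fun t ht hxt hmt ε hε =>
    eventually_rthMax_sub_mul_le (g := fun s j => h j (x s)) hr1 hrp hε
      (fun j => hx.hasDerivAt_comp ht (hh j _)) fun j hj => hact j _ hxt hmt hj
  refine fun t ht => nonneg_of_eventually_nonneg_of_eq_zero hm h0 (fun t ht hmt => ?_) t ht
  obtain ⟨η, hη, hxD⟩ := Metric.eventually_nhds_iff.1
    ((hx t ht).continuousAt.eventually_mem (hD.mem_nhds (hRD _ hmt.ge)))
  have hloc := nonneg_of_forall_nonpos_eventually_sub_mul_le (a := t) (b := t + η / 2)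
    (hm.mono fun s hs => mem_Ici.2 (le_trans ht hs.1)) hmt.ge fun s hs hms =>
      hdini s (le_trans ht hs.1) (hxD (by
        rw [Real.dist_eq, abs_of_nonneg (by linarith [hs.1])]; linarith [hs.2])) hms
  filter_upwards [Icc_mem_nhdsGT (by linarith : t < t + η / 2)] with s hs using hloc s hs

lemma tendsto_of_lyapunov (hx : IsForwardSolution F x) {K : Set E} {W : E → ℝ} {xs : E}
    {α α₁ : ℝ → ℝ} (hα : IsClassK α) (hα₁ : IsClassK α₁) (hW : Differentiable ℝ W)
    (hxK : ∀ t, 0 ≤ t → x t ∈ K) (hlow : ∀ y ∈ K, α₁ ‖y - xs‖ ≤ W y)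
    (hdec : ∀ y ∈ K, ⟪gradient W y, F y⟫ ≤ -α (W y)) :
    Tendsto x atTop (𝓝 xs) := by
  have hWlim := tendsto_zero_of_hasDerivAt_le_neg hα (fun t ht => hx.hasDerivAt_comp ht (hW _))
    (fun t ht => hdec _ (hxK t ht))
    fun t ht => (hα₁.2.2.2 _ (norm_nonneg _)).trans (hlow _ (hxK t ht))
  rw [tendsto_iff_norm_sub_tendsto_zero]
  exact hα₁.tendsto_zero_of_le (fun _ => norm_nonneg _)
    ((eventually_ge_atTop 0).mono fun t ht => hlow _ (hxK t ht)) hWlim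

end IsForwardSolution

section lyapunov

variable {E : Type*} [NormedAddCommGroup E] [InnerProductSpace ℝ E] [CompleteSpace E]
  {F : E → E} {K : Set E} {W : E → ℝ} {xs : E} {α₁ α₂ : ℝ → ℝ}

lemma lyapunov_stable (hα₁ : IsClassK α₁) (hα₂ : IsClassK α₂) (hW : Differentiable ℝ W)
    (hK : ∀ x, IsForwardSolution F x → x 0 ∈ K → ∀ t, 0 ≤ t → x t ∈ K)
    (hint : xs ∈ interior K) (hbound : ∀ y ∈ K, α₁ ‖y - xs‖ ≤ W y ∧ W y ≤ α₂ ‖y - xs‖)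
    (hdec : ∀ y ∈ K, ⟪gradient W y, F y⟫ ≤ 0) :
    ∀ ε > 0, ∃ δ > 0, ∀ x, IsForwardSolution F x → ‖x 0 - xs‖ < δ →
      ∀ t, 0 ≤ t → ‖x t - xs‖ < ε := by
  intro ε hε
  obtain ⟨ε₀, hε₀, hball⟩ := Metric.mem_nhds_iff.1 (mem_interior_iff_mem_nhds.1 hint)
  obtain ⟨δ₂, hδ₂, hα₂δ⟩ :=
    Metric.continuousWithinAt_iff.1 (hα₂.1 0 self_mem_Ici) _ (hα₁.pos hε)
  refine ⟨min ε₀ δ₂, lt_min hε₀ hδ₂, fun x hx hx0 t ht => ?_⟩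
  have hx0K : x 0 ∈ K := hball (mem_ball_iff_norm.2 (hx0.trans_le (min_le_left _ _)))
  have hxK := hK x hx hx0K
  have hWt : W (x t) ≤ W (x 0) := by
    simpa using le_sub_mul_of_hasDerivAt_le (k := 0) ht
      (fun u hu => hx.hasDerivAt_comp hu.1 (hW _)) fun u hu => by simpa using hdec _ (hxK u hu.1)
  have hα₂0 : α₂ ‖x 0 - xs‖ < α₁ ε := by
    have := hα₂δ (mem_Ici.2 (norm_nonneg _)) (by simpa using hx0.trans_le (min_le_right _ _))
    rw [hα₂.2.2.1, Real.dist_eq, sub_zero] at this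
    exact (le_abs_self _).trans_lt this
  exact hα₁.lt_of_apply_lt (norm_nonneg _) hε.le
    ((((hbound _ (hxK t ht)).1.trans hWt).trans (hbound _ hx0K).2).trans_lt hα₂0)

lemma lyapunov_asymptotically_stable {α : ℝ → ℝ} (hα : IsClassK α) (hα₁ : IsClassK α₁)
    (hα₂ : IsClassK α₂) (hW : Differentiable ℝ W)
    (hK : ∀ x, IsForwardSolution F x → x 0 ∈ K → ∀ t, 0 ≤ t → x t ∈ K)
    (hint : xs ∈ interior K) (hbound : ∀ y ∈ K, α₁ ‖y - xs‖ ≤ W y ∧ W y ≤ α₂ ‖y - xs‖)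
    (hdec : ∀ y ∈ K, ⟪gradient W y, F y⟫ ≤ -α (W y)) :
    (∀ ε > 0, ∃ δ > 0, ∀ x, IsForwardSolution F x → ‖x 0 - xs‖ < δ →
      ∀ t, 0 ≤ t → ‖x t - xs‖ < ε) ∧
    ∃ δ₀ > 0, ∀ x, IsForwardSolution F x → ‖x 0 - xs‖ < δ₀ → Tendsto x atTop (𝓝 xs) := by
  refine ⟨lyapunov_stable hα₁ hα₂ hW hK hint hbound fun y hy => (hdec y hy).trans
    (neg_nonpos.2 (hα.2.2.2 _ ((hα₁.2.2.2 _ (norm_nonneg _)).trans (hbound y hy).1))), ?_⟩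
  obtain ⟨ε₀, hε₀, hball⟩ := Metric.mem_nhds_iff.1 (mem_interior_iff_mem_nhds.1 hint)
  exact ⟨ε₀, hε₀, fun x hx hx0 => hx.tendsto_of_lyapunov hα hα₁ hW
    (hK x hx (hball (mem_ball_iff_norm.2 hx0))) (fun y hy => (hbound y hy).1) hdec⟩

end lyapunov

theorem combinatorial_stabilization_general {n p : ℕ}
    (r : ℕ) (hr1 : 1 ≤ r) (hrp : r ≤ p) (jd : Fin p)
    (xstar : Fin p → EuclideanSpace ℝ (Fin n))
    (V : Fin p → EuclideanSpace ℝ (Fin n) → ℝ)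
    (hV : ∀ j, ContDiff ℝ 1 (V j))
    (c : Fin p → ℝ) (hc : ∀ j, 0 < c j)
    -- (a) the selected equilibrium is in the interior of R̃ ∩ R_{j†}
    (hint : xstar jd ∈ interior
      ({y : EuclideanSpace ℝ (Fin n) | 0 ≤ rthMax r (fun j => c j - V j y)} ∩
       {y : EuclideanSpace ℝ (Fin n) | V jd y ≤ c jd}))
    -- (b) class-K sandwich bounds for V_{j†} near x*_{j†}
    (r₀ : ℝ)
    (α₁ α₂ : ℝ → ℝ) (hα₁ : IsClassK α₁) (hα₂ : IsClassK α₂)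
    (hRball : {y : EuclideanSpace ℝ (Fin n) | V jd y ≤ c jd} ⊆ Metric.ball (xstar jd) r₀)
    (hbound : ∀ y : EuclideanSpace ℝ (Fin n), ‖y - xstar jd‖ < r₀ →
      α₁ ‖y - xstar jd‖ ≤ V jd y ∧ V jd y ≤ α₂ ‖y - xstar jd‖)
    -- (c) closed-loop vector field and certificate inequalities
    (F : EuclideanSpace ℝ (Fin n) → EuclideanSpace ℝ (Fin n))
    (θ : EuclideanSpace ℝ (Fin n) → ℝ)
    (αj : ℝ → ℝ) (hαj : IsClassK αj)
    (αh : ℝ → ℝ) (hαh : IsClassKe αh)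
    (ρ : ℝ → ℝ) (hρ : IsPosDef ρ)
    (D : Set (EuclideanSpace ℝ (Fin n))) (hD : IsOpen D)
    (hRD : {y : EuclideanSpace ℝ (Fin n) | 0 ≤ rthMax r (fun j => c j - V j y)} ⊆ D)
    (hCLF : ∀ y ∈ D,
      ⟪gradient (V jd) y, F y⟫ ≤
        -αj (V jd y) + θ y * max 0 (-(c jd - V jd y)))
    (hCBF : ∀ j : Fin p, ∀ y ∈ D,
      ⟪gradient (fun z => c j - V j z) y, F y⟫ ≥
        -αh (c j - V j y) - θ y * ρ ((c j - V j y) - rthMax r (fun i => c i - V i y))) :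
    -- (i) forward invariance of R̃
    (∀ x : ℝ → EuclideanSpace ℝ (Fin n),
      (∀ t : ℝ, 0 ≤ t → HasDerivAt x (F (x t)) t) →
      0 ≤ rthMax r (fun j => c j - V j (x 0)) →
      ∀ t : ℝ, 0 ≤ t → 0 ≤ rthMax r (fun j => c j - V j (x t))) ∧
    -- (ii) asymptotic stability of x*_{j†}
    ((∀ ε : ℝ, 0 < ε → ∃ δ > (0:ℝ),
      ∀ x : ℝ → EuclideanSpace ℝ (Fin n),
        (∀ t : ℝ, 0 ≤ t → HasDerivAt x (F (x t)) t) →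
        ‖x 0 - xstar jd‖ < δ → ∀ t : ℝ, 0 ≤ t → ‖x t - xstar jd‖ < ε) ∧
     (∃ δ₀ > (0:ℝ),
      ∀ x : ℝ → EuclideanSpace ℝ (Fin n),
        (∀ t : ℝ, 0 ≤ t → HasDerivAt x (F (x t)) t) →
        ‖x 0 - xstar jd‖ < δ₀ → Filter.Tendsto x Filter.atTop (nhds (xstar jd)))) ∧
    -- (iii) R̃ ∩ R_{j†} is forward invariant and in the region of attraction
    (∀ x : ℝ → EuclideanSpace ℝ (Fin n),
      (∀ t : ℝ, 0 ≤ t → HasDerivAt x (F (x t)) t) →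
      0 ≤ rthMax r (fun j => c j - V j (x 0)) → V jd (x 0) ≤ c jd →
      (∀ t : ℝ, 0 ≤ t →
        0 ≤ rthMax r (fun j => c j - V j (x t)) ∧ V jd (x t) ≤ c jd) ∧
      Filter.Tendsto x Filter.atTop (nhds (xstar jd))) := by
  have hVd : ∀ j, Differentiable ℝ (V j) := fun j => (hV j).differentiable one_ne_zero
  have hR : ∀ x : ℝ → EuclideanSpace ℝ (Fin n), IsForwardSolution F x →
      0 ≤ rthMax r (fun j => c j - V j (x 0)) →
      ∀ t, 0 ≤ t → 0 ≤ rthMax r (fun j => c j - V j (x t)) := by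
    refine fun x hx => hx.rthMax_nonneg hr1 hrp (fun j => (hVd j).const_sub (c j)) hD
      (fun y hy => hRD hy) fun j y hy hle hj => ?_
    beta_reduce at hle hj
    have hcbf := hCBF j y hy
    rw [hj, sub_self, hρ.2.1, mul_zero, sub_zero] at hcbf
    exact le_trans (neg_nonneg.2 (hαh.2.2 ▸ hαh.2.1.monotone hle)) hcbf
  set K := {y : EuclideanSpace ℝ (Fin n) | 0 ≤ rthMax r (fun j => c j - V j y)} ∩
    {y | V jd y ≤ c jd}
  have hK : ∀ x, IsForwardSolution F x → x 0 ∈ K → ∀ t, 0 ≤ t → x t ∈ K :=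
    fun x hx h0 t ht => ⟨hR x hx h0.1 t ht, hx.le_of_inner_gradient_neg (hVd jd)
      (S := {y | 0 ≤ rthMax r (fun j => c j - V j y)}) (hR x hx h0.1) (fun y hy hVy => by
        have hclf := hCLF y (hRD hy)
        rw [hVy, sub_self, neg_zero, max_self, mul_zero, add_zero] at hclf
        linarith [hαj.pos (hc jd)]) h0.2 t ht⟩
  have hdec : ∀ y ∈ K, ⟪gradient (V jd) y, F y⟫ ≤ -αj (V jd y) := fun y hy => by
    have hclf := hCLF y (hRD hy.1)
    rwa [max_eq_left (by linarith [show V jd y ≤ c jd from hy.2]), mul_zero, add_zero] at hclf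
  have hbound' : ∀ y ∈ K, α₁ ‖y - xstar jd‖ ≤ V jd y ∧ V jd y ≤ α₂ ‖y - xstar jd‖ :=
    fun y hy => hbound y (mem_ball_iff_norm.1 (hRball hy.2))
  refine ⟨hR, lyapunov_asymptotically_stable hαj hα₁ hα₂ (hVd jd) hK hint hbound' hdec,
    fun x hx h0 hVx0 => ⟨hK x hx ⟨h0, hVx0⟩, IsForwardSolution.tendsto_of_lyapunov hx hαj hα₁
      (hVd jd) (hK x hx ⟨h0, hVx0⟩) (fun y hy => (hbound' y hy).1) hdec⟩⟩

/-- Theorem 1 (combinatorial stabilization, closed-loop form): with `h_j = c_j - V_j`,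
`R_j = {V_j ≤ c_j}`, `h̃ = max^{(r)} h_j` and `R̃ = {h̃ ≥ 0}`, the combined relaxed-CLF and
combinatorial-CBF conditions render `R̃` forward invariant, `x*_{j†}` asymptotically
stable, and `R̃ ∩ R_{j†}` forward invariant and contained in the region of attraction. -/
theorem combinatorial_stabilization {n p : ℕ}
    (r : ℕ) (hr1 : 1 ≤ r) (hrp : r ≤ p) (jd : Fin p)
    (xstar : Fin p → EuclideanSpace ℝ (Fin n))
    (V : Fin p → EuclideanSpace ℝ (Fin n) → ℝ)
    (hV : ∀ j, ContDiff ℝ 1 (V j)) (hV0 : ∀ j, V j (xstar j) = 0)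
    (c : Fin p → ℝ) (hc : ∀ j, 0 < c j)
    -- (a) the selected equilibrium is in the interior of R̃ ∩ R_{j†}
    (hint : xstar jd ∈ interior
      ({y : EuclideanSpace ℝ (Fin n) | 0 ≤ rthMax r (fun j => c j - V j y)} ∩
       {y : EuclideanSpace ℝ (Fin n) | V jd y ≤ c jd}))
    -- (b) class-K sandwich bounds for V_{j†} near x*_{j†}
    (r₀ : ℝ) (hr₀ : 0 < r₀)
    (α₁ α₂ : ℝ → ℝ) (hα₁ : IsClassK α₁) (hα₂ : IsClassK α₂)
    (hRball : {y : EuclideanSpace ℝ (Fin n) | V jd y ≤ c jd} ⊆ Metric.ball (xstar jd) r₀)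
    (hbound : ∀ y : EuclideanSpace ℝ (Fin n), ‖y - xstar jd‖ < r₀ →
      α₁ ‖y - xstar jd‖ ≤ V jd y ∧ V jd y ≤ α₂ ‖y - xstar jd‖)
    -- (c) closed-loop vector field and certificate inequalities
    (F : EuclideanSpace ℝ (Fin n) → EuclideanSpace ℝ (Fin n))
    (hF : Continuous F) (hFeq : F (xstar jd) = 0)
    (θ : EuclideanSpace ℝ (Fin n) → ℝ) (hθ : Continuous θ) (hθ0 : ∀ y, 0 ≤ θ y)
    (αj : ℝ → ℝ) (hαj : IsClassK αj) (hαjlip : LocallyLipschitzOn (Set.Ici 0) αj)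
    (αh : ℝ → ℝ) (hαh : IsClassKe αh) (hαhlip : LocallyLipschitz αh)
    (ρ : ℝ → ℝ) (hρc : Continuous ρ) (hρ : IsPosDef ρ)
    (D : Set (EuclideanSpace ℝ (Fin n))) (hD : IsOpen D)
    (hRD : {y : EuclideanSpace ℝ (Fin n) | 0 ≤ rthMax r (fun j => c j - V j y)} ⊆ D)
    (hCLF : ∀ y ∈ D,
      ⟪gradient (V jd) y, F y⟫ ≤
        -αj (V jd y) + θ y * max 0 (-(c jd - V jd y)))
    (hCBF : ∀ j : Fin p, ∀ y ∈ D,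
      ⟪gradient (fun z => c j - V j z) y, F y⟫ ≥
        -αh (c j - V j y) - θ y * ρ ((c j - V j y) - rthMax r (fun i => c i - V i y))) :
    -- (i) forward invariance of R̃
    (∀ x : ℝ → EuclideanSpace ℝ (Fin n),
      (∀ t : ℝ, 0 ≤ t → HasDerivAt x (F (x t)) t) →
      0 ≤ rthMax r (fun j => c j - V j (x 0)) →
      ∀ t : ℝ, 0 ≤ t → 0 ≤ rthMax r (fun j => c j - V j (x t))) ∧
    -- (ii) asymptotic stability of x*_{j†}
    ((∀ ε : ℝ, 0 < ε → ∃ δ > (0:ℝ),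
      ∀ x : ℝ → EuclideanSpace ℝ (Fin n),
        (∀ t : ℝ, 0 ≤ t → HasDerivAt x (F (x t)) t) →
        ‖x 0 - xstar jd‖ < δ → ∀ t : ℝ, 0 ≤ t → ‖x t - xstar jd‖ < ε) ∧
     (∃ δ₀ > (0:ℝ),
      ∀ x : ℝ → EuclideanSpace ℝ (Fin n),
        (∀ t : ℝ, 0 ≤ t → HasDerivAt x (F (x t)) t) →
        ‖x 0 - xstar jd‖ < δ₀ → Filter.Tendsto x Filter.atTop (nhds (xstar jd)))) ∧
    -- (iii) R̃ ∩ R_{j†} is forward invariant and in the region of attraction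
    (∀ x : ℝ → EuclideanSpace ℝ (Fin n),
      (∀ t : ℝ, 0 ≤ t → HasDerivAt x (F (x t)) t) →
      0 ≤ rthMax r (fun j => c j - V j (x 0)) → V jd (x 0) ≤ c jd →
      (∀ t : ℝ, 0 ≤ t →
        0 ≤ rthMax r (fun j => c j - V j (x t)) ∧ V jd (x t) ≤ c jd) ∧
      Filter.Tendsto x Filter.atTop (nhds (xstar jd))) :=
  combinatorial_stabilization_general r hr1 hrp jd xstar V hV c hc hint r₀ α₁ α₂ hα₁ hα₂ hRball
    hbound F θ αj hαj αh hαh ρ hρ D hD hRD hCLF hCBF
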